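/- (Lemma 1, part 2) Suppose that on [t₁, t₂] target i is outside agent j's sensing range, and R_i hits 0 at some τ ∈ (t₁, t₂) (event ρ_i⁰). Then ∇_j R_i(t) = ∇_j R_i(t₁⁺) for t ∈ [t₁, τ) and ∇_j R_i(t) = 0 for t ∈ [τ, t₂]. -/
import Mathlib

/-- (Lemma 1, part 2) If on `[t₁,t₂]` target `i` is outside agent `j`'s sensing
range and a `ρ_i⁰` event (reset `∇_j R_i(τ) = 0`) occurs at `τ ∈ (t₁,t₂)`, then
`∇_j R_i(t) = ∇_j R_i(t₁)` on `[t₁,τ)` and `∇_j R_i(t) = 0` on `[τ,t₂]`. -/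
theorem ipa_gradient_outside_range_with_reset
    (gradR dpds G : ℝ → ℝ) (B dsdθ : ℝ) (t₁ t₂ τ : ℝ)
    (h₁ : t₁ < τ) (h₂ : τ < t₂)
    (houtside : ∀ t ∈ Set.Icc t₁ t₂, dpds t = 0)
    (hpre : ∀ t ∈ Set.Ico t₁ τ,
      gradR t = gradR t₁ - B * dpds t * dsdθ * G t)
    (hreset : gradR τ = 0)
    (hpost : ∀ t ∈ Set.Icc τ t₂,
      gradR t = gradR τ - B * dpds t * dsdθ * G t) :
    (∀ t ∈ Set.Ico t₁ τ, gradR t = gradR t₁) ∧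
    (∀ t ∈ Set.Icc τ t₂, gradR t = 0) := by
  constructor
  · intro t ht
    have h0 := houtside t ⟨ht.1, le_of_lt (ht.2.trans h₂)⟩
    rw [hpre t ht, h0]; ring
  · intro t ht
    have h0 := houtside t ⟨le_of_lt (h₁.trans_le ht.1), ht.2⟩
    rw [hpost t ht, h0, hreset]; ring
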